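/- Let G = (A, (SPath^{T_i}_{w_i})_{i∈[n]}) be an n-player shortest-path game on a possibly infinite arena, with a target T_i ⊆ V and a weight function w_i : E → ℕ for each player i. A play π = v_0 v_1 … is the outcome from v_0 of some Nash equilibrium if and only if: (i) for every player i whose target T_i is not visited by π and every j ∈ ℕ, v_j ∉ W_i(Reach(T_i)); and (ii) for every player i whose target T_i is visited by π and every j ≤ min{k ∈ ℕ : v_k ∈ T_i}, SPath^{T_i}_{w_i}(π_{≥j}) ≤ val_i(v_j), where π_{≥j} denotes the suffix of π from position j, W_i(Reach(T_i)) is the winning region of player i in their coalition game for Reach(T_i), and val_i(v) is the value of v in player i's coalition game with cost SPath^{T_i}_{w_i}. -/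

import Mathlib

open scoped ENNReal Classical

/-- An `n`-player arena on a (possibly infinite) directed graph: an edge relation
with no deadlocks, together with an assignment of each vertex to its owner. -/
structure Arena (V : Type) (n : ℕ) where
  E : V → V → Prop
  owner : V → Fin n
  no_deadlock : ∀ v, ∃ v', E v v'

namespace Arena

variable {V : Type} {n : ℕ}

/-- A play: an infinite sequence of vertices following edges. -/
def IsPlay (A : Arena V n) (π : ℕ → V) : Prop := ∀ j, A.E (π j) (π (j + 1))

/-- A strategy: given the past history (the earlier vertices, oldest first) and the
current vertex, pick an `E`-successor of the current vertex. -/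
structure Strategy (A : Arena V n) where
  next : List V → V → V
  valid : ∀ h v, A.E v (next h v)

/-- The list of the first `j` vertices of a play. -/
def pref (π : ℕ → V) (j : ℕ) : List V := (List.range j).map π

/-- A play is consistent with the strategy `σ` used by player `i`. -/
def Consistent (A : Arena V n) (i : Fin n) (σ : A.Strategy) (π : ℕ → V) : Prop :=
  ∀ j, A.owner (π j) = i → π (j + 1) = σ.next (pref π j) (π j)

/-- A memoryless strategy only depends on the current vertex. -/
def Memoryless {A : Arena V n} (σ : A.Strategy) : Prop :=
  ∀ h h' v, σ.next h v = σ.next h' v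

def outcomeAux (A : Arena V n) (σ : Fin n → A.Strategy) (v0 : V) : ℕ → List V × V
  | 0 => ([], v0)
  | j + 1 =>
      let p := outcomeAux A σ v0 j
      (p.1 ++ [p.2], (σ (A.owner p.2)).next p.1 p.2)

/-- The outcome of the strategy profile `σ` from `v0`: the unique play from `v0`
consistent with every strategy of the profile. -/
def outcome (A : Arena V n) (σ : Fin n → A.Strategy) (v0 : V) (j : ℕ) : V :=
  (outcomeAux A σ v0 j).2

/-- Reachability objective: visit `T`. -/
def ReachObj (T : Set V) : Set (ℕ → V) := {π | ∃ j, π j ∈ T}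

/-- Safety objective: never visit `T`. -/
def SafeObj (T : Set V) : Set (ℕ → V) := {π | ∀ j, π j ∉ T}

/-- Büchi objective: visit `T` infinitely often. -/
def BuchiObj (T : Set V) : Set (ℕ → V) := {π | ∀ j, ∃ k, j ≤ k ∧ π k ∈ T}

/-- co-Büchi objective: visit `T` only finitely often. -/
def CoBuchiObj (T : Set V) : Set (ℕ → V) := {π | ∃ j, ∀ k, j ≤ k → π k ∉ T}

/-- Shortest-path cost of a play: the total weight up to the first visit of `T`,
and `⊤` if `T` is never visited. -/
noncomputable def spCost (w : V → V → ℕ) (T : Set V) (π : ℕ → V) : ℝ≥0∞ :=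
  if ∃ k, π k ∈ T then
    (Finset.range (sInf {k | π k ∈ T})).sum fun j => (w (π j) (π (j + 1)) : ℝ≥0∞)
  else ⊤

/-- Winning region of player `p` (whose objective is `Ω`) in a two-player game:
vertices from which `p` has a strategy all of whose consistent plays lie in `Ω`. -/
def WinRegion (A : Arena V 2) (p : Fin 2) (Ω : Set (ℕ → V)) : Set V :=
  {v | ∃ σ : A.Strategy, ∀ π, A.IsPlay π → π 0 = v → A.Consistent p σ π → π ∈ Ω}

/-- Lower value `inf_{σ₁} sup_{σ₂}` of a two-player zero-sum game with cost `c`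
(minimised by player 1, maximised by player 2). -/
noncomputable def valIS (A : Arena V 2) (c : (ℕ → V) → ℝ≥0∞) (v : V) : ℝ≥0∞ :=
  ⨅ σ1 : A.Strategy, ⨆ σ2 : A.Strategy, c (outcome A ![σ1, σ2] v)

/-- Upper value `sup_{σ₂} inf_{σ₁}`. -/
noncomputable def valSI (A : Arena V 2) (c : (ℕ → V) → ℝ≥0∞) (v : V) : ℝ≥0∞ :=
  ⨆ σ2 : A.Strategy, ⨅ σ1 : A.Strategy, c (outcome A ![σ1, σ2] v)

/-- Nash equilibrium from `v0` for cost functions (each player minimises):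
no unilateral deviation decreases the deviator's cost. -/
def IsNECost (A : Arena V n) (cost : Fin n → (ℕ → V) → ℝ≥0∞)
    (σ : Fin n → A.Strategy) (v0 : V) : Prop :=
  ∀ (i : Fin n) (τ : A.Strategy),
    cost i (outcome A σ v0) ≤ cost i (outcome A (Function.update σ i τ) v0)

/-- Nash equilibrium from `v0` for objectives: if a unilateral deviation of player `i`
satisfies `Ω i`, then so does the equilibrium outcome. -/
def IsNEObj (A : Arena V n) (Ω : Fin n → Set (ℕ → V))
    (σ : Fin n → A.Strategy) (v0 : V) : Prop :=
  ∀ (i : Fin n) (τ : A.Strategy),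
    outcome A (Function.update σ i τ) v0 ∈ Ω i → outcome A σ v0 ∈ Ω i

/-- The coalition arena of player `i`: player `i` (as player `0`) against all others. -/
def coalition (A : Arena V n) (i : Fin n) : Arena V 2 where
  E := A.E
  owner := fun v => if A.owner v = i then 0 else 1
  no_deadlock := A.no_deadlock

/-- Winning region of player `i` in their coalition game for objective `Ω`. -/
def coalWin (A : Arena V n) (i : Fin n) (Ω : Set (ℕ → V)) : Set V :=
  WinRegion (coalition A i) 0 Ω

/-- Value of a vertex in player `i`'s coalition game with cost `c`. -/
noncomputable def coalVal (A : Arena V n) (i : Fin n) (c : (ℕ → V) → ℝ≥0∞) (v : V) :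
    ℝ≥0∞ :=
  valIS (coalition A i) c v

/-- Players whose reachability objective is satisfied by `π`. -/
def satReach (T : Fin n → Set V) (π : ℕ → V) : Set (Fin n) := {i | ∃ j, π j ∈ T i}

/-- Players whose safety objective is satisfied by `π`. -/
def satSafe (T : Fin n → Set V) (π : ℕ → V) : Set (Fin n) := {i | ∀ j, π j ∉ T i}

/-- Players whose Büchi objective is satisfied by `π`. -/
def satBuchi (T : Fin n → Set V) (π : ℕ → V) : Set (Fin n) :=
  {i | ∀ j, ∃ k, j ≤ k ∧ π k ∈ T i}

/-- Players whose co-Büchi objective is satisfied by `π`. -/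
def satCoBuchi (T : Fin n → Set V) (π : ℕ → V) : Set (Fin n) :=
  {i | ∃ j, ∀ k, j ≤ k → π k ∉ T i}

/-- Earliest positions at which the targets visited by `π` are first visited. -/
def visitSet (T : Fin n → Set V) (π : ℕ → V) : Set ℕ :=
  {m | ∃ i, (∃ j, π j ∈ T i) ∧ m = sInf {j | π j ∈ T i}}

/-- A Mealy machine with memory states `M`. -/
structure Mealy (A : Arena V n) (M : Type) where
  init : M
  up : M → V → M
  nxt : M → V → V
  valid : ∀ m v, A.E v (nxt m v)

/-- The strategy `σ` is induced by the Mealy machine `mm`. -/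
def InducedBy {A : Arena V n} {M : Type} (σ : A.Strategy) (mm : Mealy A M) : Prop :=
  ∀ h v, σ.next h v = mm.nxt (h.foldl mm.up mm.init) v

/-- `σ` has memory size at most `b`. -/
def HasMemorySize {A : Arena V n} (σ : A.Strategy) (b : ℕ) : Prop :=
  ∃ (M : Type) (mm : Mealy A M), Finite M ∧ Nat.card M ≤ b ∧ InducedBy σ mm

/-- `σ` is a finite-memory strategy. -/
def FiniteMemory {A : Arena V n} (σ : A.Strategy) : Prop :=
  ∃ (M : Type) (mm : Mealy A M), Finite M ∧ InducedBy σ mm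

/-- The (finite) segment of `π` between positions `a` and `b` is a simple history. -/
def SimpleSeg (π : ℕ → V) (a b : ℕ) : Prop :=
  ∀ m m', a ≤ m → m ≤ b → a ≤ m' → m' ≤ b → π m = π m' → m = m'

/-- The suffix of `π` from position `a` is a simple play. -/
def SimplePlaySeg (π : ℕ → V) (a : ℕ) : Prop :=
  ∀ m m', a ≤ m → a ≤ m' → π m = π m' → m = m'

/-- The suffix of `π` from position `a` is a simple lasso `p c^ω` with `p c`
a simple history. -/
def SimpleLassoSeg (π : ℕ → V) (a : ℕ) : Prop :=
  ∃ k ℓ, 0 < ℓ ∧ (∀ m, a + k ≤ m → π (m + ℓ) = π m) ∧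
    ∀ m m', a ≤ m → m < a + k + ℓ → a ≤ m' → m' < a + k + ℓ → π m = π m' → m = m'

/-- The segment of `π` between positions `a` and `b` is a simple cycle. -/
def SimpleCycleSeg (π : ℕ → V) (a b : ℕ) : Prop :=
  a < b ∧ π b = π a ∧
    ∀ m m', a ≤ m → m < b → a ≤ m' → m' < b → π m = π m' → m = m'

/-- Total weight of a history (a list of vertices). -/
def histWeight (w : V → V → ℕ) : List V → ℕ
  | [] => 0
  | [_] => 0
  | a :: b :: t => w a b + histWeight w (b :: t)

/-- The list of vertices along positions `a..b` (inclusive) of a play. -/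
def segList (π : ℕ → V) (a b : ℕ) : List V :=
  (List.range (b - a + 1)).map fun m => π (a + m)

/-- The segment of `π` between positions `a` and `b` has minimal weight among all
histories that share its first and last vertex and traverse only its vertices. -/
def MinWeightSeg (A : Arena V n) (w : V → V → ℕ) (π : ℕ → V) (a b : ℕ) : Prop :=
  ∀ h : List V, h ≠ [] → List.Chain' A.E h →
    h.head? = some (π a) → h.getLast? = some (π b) →
    (∀ x ∈ h, ∃ m, a ≤ m ∧ m ≤ b ∧ π m = x) →
    histWeight w (segList π a b) ≤ histWeight w h

/-- Given cut positions `p`, segments number `l` and `l'` of `π` carry the same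
vertex sequence. -/
def SegEq (π : ℕ → V) (p : ℕ → ℕ) (l l' : ℕ) : Prop :=
  p (l' + 1) - p l' = p (l + 1) - p l ∧
    ∀ m, m ≤ p (l + 1) - p l → π (p l' + m) = π (p l + m)

/-- There is no cycle of the arena using only vertices of `S` and avoiding `avoid`. -/
def NoCycleAvoid (A : Arena V n) (S : Set V) (avoid : V) : Prop :=
  ¬ ∃ (m : ℕ) (c : ℕ → V), 0 < m ∧ (∀ j, j < m → A.E (c j) (c (j + 1))) ∧
      c m = c 0 ∧ ∀ j, j ≤ m → c j ∈ S ∧ c j ≠ avoid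

end Arena

open Arena

/-!
If the condition fails at a position `j` before player `i` reaches her target, she
deviates there to a strategy of her coalition game that reaches `T i` (case (i)) or costs
less than the rest of `π` (case (ii)); the prefix up to `j` is unchanged, so her cost
drops. Conversely, a grim-trigger profile follows `π`, and once player `i` leaves `π`
right after position `q`, the others play a strategy of `i`'s coalition game from `π q`
that keeps her cost at least that of the rest of `π`. Such a strategy exists because open
games are determined (Gale–Stewart): it keeps `i` out of `T i` when `π q` is not winning
for `i`, and it keeps her cost at least `C ≤ val_i(π q)` because "cost `< C`" is an open
objective and costs are natural numbers.
-/

namespace Arena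

variable {V : Type} {n : ℕ}

section Prefix

lemma pref_length (ρ : ℕ → V) (k : ℕ) : (pref ρ k).length = k := by
  simp [pref]

lemma pref_succ (ρ : ℕ → V) (k : ℕ) : pref ρ (k + 1) = pref ρ k ++ [ρ k] := by
  simp [pref, List.range_succ]

lemma getElem?_pref (ρ : ℕ → V) (k t : ℕ) :
    (pref ρ k)[t]? = if t < k then some (ρ t) else none := by
  by_cases h : t < k <;> simp [pref, h]

lemma pref_eq_pref_iff {ρ ρ' : ℕ → V} {k : ℕ} :
    pref ρ k = pref ρ' k ↔ ∀ t < k, ρ t = ρ' t := by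
  simp [pref, List.map_inj_left]

lemma pref_drop (ρ : ℕ → V) (a t : ℕ) :
    (pref ρ (a + t)).drop a = pref (fun m => ρ (a + m)) t := by
  simp [pref, List.range_add, List.map_map, Function.comp_def]

end Prefix

section Outcome

variable {A : Arena V n}

lemma outcomeAux_fst (σ : Fin n → A.Strategy) (v0 : V) (j : ℕ) :
    (outcomeAux A σ v0 j).1 = pref (outcome A σ v0) j := by
  induction j with
  | zero => rfl
  | succ j ih => rw [pref_succ, ← ih]; rfl

lemma outcome_succ (σ : Fin n → A.Strategy) (v0 : V) (j : ℕ) :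
    outcome A σ v0 (j + 1) =
      (σ (A.owner (outcome A σ v0 j))).next (pref (outcome A σ v0) j) (outcome A σ v0 j) := by
  rw [← outcomeAux_fst]; rfl

lemma isPlay_outcome (σ : Fin n → A.Strategy) (v0 : V) : A.IsPlay (outcome A σ v0) :=
  fun j => outcome_succ σ v0 j ▸ (σ _).valid _ _

lemma consistent_outcome (σ : Fin n → A.Strategy) (v0 : V) (i : Fin n) :
    A.Consistent i (σ i) (outcome A σ v0) := by
  intro j hj
  rw [outcome_succ, hj]

lemma outcome_eq_of_forall_lt {σ : Fin n → A.Strategy} {v0 : V} {ρ : ℕ → V} {k : ℕ}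
    (h0 : ρ 0 = v0)
    (hstep : ∀ t < k, ρ (t + 1) = (σ (A.owner (ρ t))).next (pref ρ t) (ρ t)) :
    ∀ t ≤ k, outcome A σ v0 t = ρ t := by
  intro t
  induction t using Nat.strong_induction_on with
  | _ t ih =>
    intro ht
    cases t with
    | zero => exact h0.symm
    | succ t =>
      have hpref : pref (outcome A σ v0) t = pref ρ t :=
        pref_eq_pref_iff.2 fun s hs => ih s (by omega) (by omega)
      rw [outcome_succ, hpref, ih t (by omega) (by omega), hstep t (by omega)]

lemma outcome_eq_of_consistent {σ : Fin n → A.Strategy} {v0 : V} {ρ : ℕ → V}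
    (h0 : ρ 0 = v0) (hρ : ∀ i, A.Consistent i (σ i) ρ) : outcome A σ v0 = ρ :=
  funext fun t => outcome_eq_of_forall_lt h0 (fun s _ => hρ _ s rfl) t le_rfl

end Outcome

instance (A : Arena V n) : Nonempty A.Strategy :=
  ⟨⟨fun _ v => (A.no_deadlock v).choose, fun _ v => (A.no_deadlock v).choose_spec⟩⟩

noncomputable def Strategy.ofPlay {A : Arena V n} {ρ : ℕ → V} (hρ : A.IsPlay ρ) :
    A.Strategy where
  next h v := if v = ρ h.length then ρ (h.length + 1) else (A.no_deadlock v).choose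
  valid h v := by
    split_ifs with hv
    · exact hv ▸ hρ _
    · exact (A.no_deadlock v).choose_spec

lemma consistent_ofPlay {A : Arena V n} {ρ : ℕ → V} (hρ : A.IsPlay ρ) (i : Fin n) :
    A.Consistent i (Strategy.ofPlay hρ) ρ := by
  intro j _
  simp [Strategy.ofPlay, pref_length]

section Coalition

variable {A : Arena V n} {i : Fin n} {v : V}

lemma coalition_owner_eq_zero : (coalition A i).owner v = 0 ↔ A.owner v = i := by
  simp [coalition]

lemma coalition_owner_eq_one : (coalition A i).owner v = 1 ↔ A.owner v ≠ i := by
  simp [coalition]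

end Coalition

section ShortestPath

variable {w : V → V → ℕ} {T : Set V} {ρ ρ' : ℕ → V}

def prefixWeight (w : V → V → ℕ) (ρ : ℕ → V) (k : ℕ) : ℕ :=
  ∑ t ∈ Finset.range k, w (ρ t) (ρ (t + 1))

lemma prefixWeight_add (w : V → V → ℕ) (ρ : ℕ → V) (a b : ℕ) :
    prefixWeight w ρ (a + b) = prefixWeight w ρ a + prefixWeight w (fun m => ρ (a + m)) b := by
  simp [prefixWeight, Finset.sum_range_add, add_assoc]

lemma prefixWeight_congr {k : ℕ} (h : ∀ t ≤ k, ρ' t = ρ t) :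
    prefixWeight w ρ' k = prefixWeight w ρ k :=
  Finset.sum_congr rfl fun t ht => by
    rw [Finset.mem_range] at ht
    rw [h t ht.le, h (t + 1) ht]

lemma spCost_eq_top (h : ∀ k, ρ k ∉ T) : spCost w T ρ = ⊤ :=
  if_neg (not_exists.2 h)

lemma spCost_lt_top_iff : spCost w T ρ < ⊤ ↔ ∃ k, ρ k ∈ T := by
  refine ⟨fun h => ?_, fun h => ?_⟩
  · by_contra hno
    exact h.ne (spCost_eq_top (not_exists.1 hno))
  · rw [spCost, if_pos h]
    exact ENNReal.sum_lt_top.2 fun _ _ => ENNReal.natCast_lt_top _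

lemma spCost_eq_prefixWeight {k : ℕ} (hk : ρ k ∈ T) (hfirst : ∀ t < k, ρ t ∉ T) :
    spCost w T ρ = prefixWeight w ρ k := by
  have hinf : sInf {t | ρ t ∈ T} = k :=
    le_antisymm (Nat.sInf_le hk) (le_csInf ⟨k, hk⟩ fun t ht => not_lt.1 fun h => hfirst t h ht)
  rw [spCost, if_pos ⟨k, hk⟩, hinf, prefixWeight]
  push_cast
  rfl

lemma exists_spCost_eq_prefixWeight (h : ∃ k, ρ k ∈ T) :
    ∃ k, ρ k ∈ T ∧ spCost w T ρ = prefixWeight w ρ k :=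
  ⟨Nat.find h, Nat.find_spec h,
    spCost_eq_prefixWeight (Nat.find_spec h) fun _ => Nat.find_min h⟩

lemma spCost_le_natCast_pred {C : ℕ} (h : spCost w T ρ < C) :
    spCost w T ρ ≤ (C - 1 : ℕ) := by
  obtain ⟨k, -, hk⟩ := exists_spCost_eq_prefixWeight
    (spCost_lt_top_iff.1 (h.trans (ENNReal.natCast_lt_top C)))
  rw [hk] at h ⊢
  exact_mod_cast Nat.le_sub_one_of_lt (by exact_mod_cast h)

lemma spCost_congr {k : ℕ} (hk : ρ k ∈ T) (h : ∀ t ≤ k, ρ' t = ρ t) :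
    spCost w T ρ' = spCost w T ρ := by
  have hex : ∃ t, ρ t ∈ T := ⟨k, hk⟩
  have hle : Nat.find hex ≤ k := Nat.find_min' hex hk
  have hfirst : ∀ t < Nat.find hex, ρ' t ∉ T := fun t ht => by
    rw [h t (by omega)]
    exact Nat.find_min hex ht
  rw [spCost_eq_prefixWeight (Nat.find_spec hex) fun _ => Nat.find_min hex,
    spCost_eq_prefixWeight (h _ hle ▸ Nat.find_spec hex) hfirst,
    prefixWeight_congr fun t ht => h t (by omega)]

lemma spCost_eq_prefixWeight_add {j : ℕ} (hj : ∀ t < j, ρ t ∉ T) :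
    spCost w T ρ = prefixWeight w ρ j + spCost w T (fun m => ρ (j + m)) := by
  by_cases hhit : ∃ k, ρ k ∈ T
  · have hle : j ≤ Nat.find hhit := not_lt.1 fun h => hj _ h (Nat.find_spec hhit)
    obtain ⟨m, hm⟩ := Nat.exists_eq_add_of_le hle
    have hfirst : ∀ t < m, ρ (j + t) ∉ T := fun t ht => Nat.find_min hhit (by omega)
    rw [spCost_eq_prefixWeight (Nat.find_spec hhit) fun _ => Nat.find_min hhit,
      spCost_eq_prefixWeight (ρ := fun t => ρ (j + t))
        (by rw [← hm]; exact Nat.find_spec hhit) hfirst, hm, prefixWeight_add]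
    push_cast
    rfl
  · push Not at hhit
    rw [spCost_eq_top hhit, spCost_eq_top fun m => hhit (j + m), add_top]

lemma spCost_le_iff_of_eqOn {q : ℕ} (hagree : ∀ t ≤ q, ρ' t = ρ t)
    (hq : ∀ t < q, ρ t ∉ T) :
    spCost w T ρ ≤ spCost w T ρ' ↔
      spCost w T (fun m => ρ (q + m)) ≤ spCost w T (fun m => ρ' (q + m)) := by
  have hq' : ∀ t < q, ρ' t ∉ T := fun t ht => by
    rw [hagree t ht.le]
    exact hq t ht
  rw [spCost_eq_prefixWeight_add hq, spCost_eq_prefixWeight_add hq', prefixWeight_congr hagree]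
  exact ENNReal.add_le_add_iff_left (ENNReal.natCast_ne_top _)

lemma spCost_le_of_eqOn {q : ℕ} (hagree : ∀ t ≤ q, ρ' t = ρ t)
    (hsuffix : (∀ t < q, ρ t ∉ T) →
      spCost w T (fun m => ρ (q + m)) ≤ spCost w T (fun m => ρ' (q + m))) :
    spCost w T ρ ≤ spCost w T ρ' := by
  by_cases hq : ∀ t < q, ρ t ∉ T
  · exact (spCost_le_iff_of_eqOn hagree hq).2 (hsuffix hq)
  · push Not at hq
    obtain ⟨t, ht, hT⟩ := hq
    exact (spCost_congr hT fun s hs => hagree s (by omega)).ge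

end ShortestPath

section OpenDeterminacy

def IsOpenObj (Ω : Set (ℕ → V)) : Prop :=
  ∀ ρ ∈ Ω, ∃ k, ∀ ρ', (∀ t ≤ k, ρ' t = ρ t) → ρ' ∈ Ω

lemma isOpenObj_reachObj (T : Set V) : IsOpenObj (ReachObj T) :=
  fun _ ⟨k, hk⟩ => ⟨k, fun _ h => ⟨k, (h k le_rfl).symm ▸ hk⟩⟩

lemma isOpenObj_spCost_lt (w : V → V → ℕ) (T : Set V) (D : ℝ≥0∞) :
    IsOpenObj {ρ | spCost w T ρ < D} := by
  intro ρ hρ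
  obtain ⟨k, hk⟩ := spCost_lt_top_iff.1 (lt_of_lt_of_le hρ le_top)
  refine ⟨k, fun ρ' h => ?_⟩
  show spCost w T ρ' < D
  rwa [spCost_congr hk h]

variable {B : Arena V 2} {Ω : Set (ℕ → V)}

def WinsFrom (B : Arena V 2) (Ω : Set (ℕ → V)) (h : List V) (v : V) : Prop :=
  ∃ σ : B.Strategy, ∀ ρ, B.IsPlay ρ → pref ρ h.length = h → ρ h.length = v →
    (∀ j ≥ h.length, B.owner (ρ j) = 0 → ρ (j + 1) = σ.next (pref ρ j) (ρ j)) →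
    ρ ∈ Ω

lemma mem_winRegion_of_winsFrom_nil {v : V} (hv : WinsFrom B Ω [] v) :
    v ∈ WinRegion B 0 Ω := by
  obtain ⟨σ, hσ⟩ := hv
  exact ⟨σ, fun ρ hρ h0 hc => hσ ρ hρ (by simp [pref]) h0 fun j _ => hc j⟩

lemma winsFrom_of_owner_eq_zero {h : List V} {v v' : V} (hv : B.owner v = 0) (he : B.E v v')
    (hwin : WinsFrom B Ω (h ++ [v]) v') : WinsFrom B Ω h v := by
  obtain ⟨σ, hσ⟩ := hwin
  refine ⟨⟨fun g u => if g = h ∧ u = v then v' else σ.next g u, fun g u => ?_⟩, ?_⟩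
  · split_ifs with hgu
    · exact hgu.2 ▸ he
    · exact σ.valid g u
  intro ρ hρ hpre hρv hc
  have hpre' : pref ρ (h ++ [v]).length = h ++ [v] := by
    rw [List.length_append, List.length_singleton, pref_succ, hpre, hρv]
  have hnext : ρ (h.length + 1) = v' := by
    rw [hc h.length le_rfl (hρv ▸ hv)]
    simp [hpre, hρv]
  refine hσ ρ hρ hpre' (by simpa using hnext) fun j hj hown => ?_
  rw [List.length_append, List.length_singleton] at hj
  have hne : pref ρ j ≠ h := fun heq => by
    have := congrArg List.length heq
    rw [pref_length] at this
    omega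
  rw [hc j (by omega) hown]
  simp [hne]

lemma winsFrom_of_forall_edge {h : List V} {v : V}
    (hall : ∀ v', B.E v v' → WinsFrom B Ω (h ++ [v]) v') : WinsFrom B Ω h v := by
  have hex : ∀ v', ∃ σ : B.Strategy, B.E v v' → ∀ ρ, B.IsPlay ρ →
      pref ρ (h.length + 1) = h ++ [v] → ρ (h.length + 1) = v' →
      (∀ j ≥ h.length + 1, B.owner (ρ j) = 0 → ρ (j + 1) = σ.next (pref ρ j) (ρ j)) →
      ρ ∈ Ω := fun v' => by
    by_cases he : B.E v v'
    · obtain ⟨σ, hσ⟩ := hall v' he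
      exact ⟨σ, fun _ => by simpa using hσ⟩
    · exact ⟨Classical.arbitrary _, fun he' => absurd he' he⟩
  choose σ hσ using hex
  -- after the history `h ++ [v]`, play the winning strategy of the successor that was chosen
  refine ⟨⟨fun g u => (σ ((g ++ [u]).getD (h.length + 1) u)).next g u,
    fun g u => (σ _).valid g u⟩, ?_⟩
  intro ρ hρ hpre hρv hc
  refine hσ _ (hρv ▸ hρ h.length) ρ hρ (by rw [pref_succ, hpre, hρv]) rfl
    fun j hj hown => ?_
  rw [hc j (by omega) hown]
  dsimp only
  rw [← pref_succ]
  congr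
  rw [List.getD_eq_getElem?_getD, getElem?_pref, if_pos (by omega)]
  rfl

/-- Gale–Stewart: open games are determined. -/
theorem exists_spoiler_of_not_mem_winRegion (hΩ : IsOpenObj Ω) {v : V}
    (hv : v ∉ WinRegion B 0 Ω) :
    ∃ S : B.Strategy, ∀ ρ, B.IsPlay ρ → ρ 0 = v → B.Consistent 1 S ρ → ρ ∉ Ω := by
  -- player `1` keeps the play at histories from which player `0` does not win
  let S : B.Strategy :=
    ⟨fun g u => if hu : ∃ u', B.E u u' ∧ ¬ WinsFrom B Ω (g ++ [u]) u' then hu.choose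
      else (B.no_deadlock u).choose,
     fun g u => by
      split_ifs with hu
      exacts [hu.choose_spec.1, (B.no_deadlock u).choose_spec]⟩
  refine ⟨S, fun ρ hρ h0 hc hρΩ => ?_⟩
  have hlose : ∀ k, ¬ WinsFrom B Ω (pref ρ k) (ρ k) := by
    intro k
    induction k with
    | zero => exact fun hw => hv (h0 ▸ mem_winRegion_of_winsFrom_nil hw)
    | succ k ih =>
      rw [pref_succ]
      by_cases hown : B.owner (ρ k) = 0
      · exact fun hw => ih (winsFrom_of_owner_eq_zero hown (hρ k) hw)
      · have hown : B.owner (ρ k) = 1 := by omega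
        have hex : ∃ u', B.E (ρ k) u' ∧ ¬ WinsFrom B Ω (pref ρ k ++ [ρ k]) u' := by
          by_contra hno
          push Not at hno
          exact ih (winsFrom_of_forall_edge hno)
        rw [hc k hown]
        simpa only [S, dif_pos hex] using hex.choose_spec.2
  obtain ⟨k, hk⟩ := hΩ ρ hρΩ
  refine hlose k ⟨S, fun ρ' _ hpre hk' _ => hk ρ' fun t ht => ?_⟩
  rw [pref_length] at hpre hk'
  rcases ht.lt_or_eq with ht | rfl
  · exact pref_eq_pref_iff.1 hpre t ht
  · exact hk'

end OpenDeterminacy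

section Value

variable {B : Arena V 2}

def GuaranteesAtLeast (B : Arena V 2) (S : B.Strategy) (c : (ℕ → V) → ℝ≥0∞) (v : V)
    (x : ℝ≥0∞) : Prop :=
  ∀ ρ, B.IsPlay ρ → ρ 0 = v → B.Consistent 1 S ρ → x ≤ c ρ

lemma valIS_le_of_forall {c : (ℕ → V) → ℝ≥0∞} {v : V} {x : ℝ≥0∞} (S : B.Strategy)
    (h : ∀ ρ, B.IsPlay ρ → ρ 0 = v → B.Consistent 0 S ρ → c ρ ≤ x) :
    valIS B c v ≤ x :=
  iInf_le_of_le S <| iSup_le fun S' =>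
    h _ (isPlay_outcome _ v) rfl (by simpa using consistent_outcome ![S, S'] v 0)

lemma exists_forall_lt_of_valIS_lt {c : (ℕ → V) → ℝ≥0∞} {v : V} {D : ℝ≥0∞}
    (h : valIS B c v < D) :
    ∃ S : B.Strategy, ∀ ρ, B.IsPlay ρ → ρ 0 = v → B.Consistent 0 S ρ → c ρ < D := by
  obtain ⟨S, hS⟩ := iInf_lt_iff.1 h
  refine ⟨S, fun ρ hρ h0 hc => lt_of_le_of_lt ?_ hS⟩
  have hout : outcome B ![S, Strategy.ofPlay hρ] v = ρ := by
    refine outcome_eq_of_consistent h0 fun i => ?_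
    fin_cases i
    · simpa using hc
    · simpa using consistent_ofPlay hρ 1
  exact hout ▸ le_iSup (fun S' => c (outcome B ![S, S'] v)) (Strategy.ofPlay hρ)

lemma exists_guaranteesAtLeast_of_le_valIS (w : V → V → ℕ) (T : Set V) {C : ℕ} {v : V}
    (hC : (C : ℝ≥0∞) ≤ valIS B (spCost w T) v) :
    ∃ S : B.Strategy, GuaranteesAtLeast B S (spCost w T) v C := by
  rcases Nat.eq_zero_or_pos C with rfl | hpos
  · exact ⟨Classical.arbitrary _, fun _ _ _ _ => by simp⟩
  have hlose : v ∉ WinRegion B 0 {ρ | spCost w T ρ < C} := by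
    rintro ⟨S, hS⟩
    have hle : valIS B (spCost w T) v ≤ (C - 1 : ℕ) :=
      valIS_le_of_forall S fun ρ hρ h0 hc => spCost_le_natCast_pred (hS ρ hρ h0 hc)
    have : C ≤ C - 1 := by exact_mod_cast hC.trans hle
    omega
  obtain ⟨S, hS⟩ := exists_spoiler_of_not_mem_winRegion (isOpenObj_spCost_lt w T C) hlose
  exact ⟨S, fun ρ hρ h0 hc => not_lt.1 (hS ρ hρ h0 hc)⟩

end Value

section Deviation

variable {A : Arena V n} {π : ℕ → V} {i : Fin n}

noncomputable def Strategy.followThen (hπ : A.IsPlay π) (j : ℕ)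
    (S : (coalition A i).Strategy) : A.Strategy where
  next g u := if g.length < j ∧ u = π g.length then π (g.length + 1) else S.next (g.drop j) u
  valid g u := by
    split_ifs with h
    · exact h.2 ▸ hπ _
    · exact S.valid _ _

lemma outcome_update_followThen {σ : Fin n → A.Strategy} (hπ : A.IsPlay π)
    (hout : outcome A σ (π 0) = π) (j : ℕ) (S : (coalition A i).Strategy) :
    let ρ := outcome A (Function.update σ i (Strategy.followThen hπ j S)) (π 0)
    (∀ t ≤ j, ρ t = π t) ∧ Consistent (coalition A i) 0 S (fun t => ρ (j + t)) := by
  intro ρ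
  have hσ : ∀ p, A.Consistent p (σ p) π := fun p => hout ▸ consistent_outcome σ (π 0) p
  refine ⟨outcome_eq_of_forall_lt rfl fun t ht => ?_, fun t ht => ?_⟩
  · by_cases hown : A.owner (π t) = i
    · rw [hown, Function.update_self]
      simp [Strategy.followThen, pref_length, ht]
    · rw [Function.update_of_ne hown]
      exact hσ _ t rfl
  · have hown : A.owner (ρ (j + t)) = i := coalition_owner_eq_zero.1 ht
    show ρ (j + t + 1) = S.next (pref (fun m => ρ (j + m)) t) (ρ (j + t))
    refine (consistent_outcome _ (π 0) i (j + t) hown).trans ?_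
    rw [Function.update_self]
    simp [Strategy.followThen, pref_length, pref_drop, ρ]

lemma spCost_shift_lt_of_forall_deviation {σ : Fin n → A.Strategy} {w : V → V → ℕ}
    {T : Set V} (hπ : A.IsPlay π) (hout : outcome A σ (π 0) = π)
    (hNE : ∀ τ, spCost w T (outcome A σ (π 0)) ≤
      spCost w T (outcome A (Function.update σ i τ) (π 0)))
    {j : ℕ} (hj : ∀ t < j, π t ∉ T) {D : ℝ≥0∞} (S : (coalition A i).Strategy)
    (hS : ∀ ρ, (coalition A i).IsPlay ρ → ρ 0 = π j →
      Consistent (coalition A i) 0 S ρ → spCost w T ρ < D) :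
    spCost w T (fun m => π (j + m)) < D := by
  obtain ⟨hagree, hcons⟩ := outcome_update_followThen hπ hout j S
  have hle := hNE (Strategy.followThen hπ j S)
  rw [hout, spCost_le_iff_of_eqOn hagree hj] at hle
  exact hle.trans_lt (hS _ (fun t => isPlay_outcome _ _ (j + t)) (hagree j le_rfl) hcons)

end Deviation

lemma exists_punisher {A : Arena V n} {π : ℕ → V} (i : Fin n) (w : V → V → ℕ) (T : Set V)
    (hmiss : (∀ k, π k ∉ T) → ∀ j, π j ∉ coalWin A i (ReachObj T))
    (hval : (∃ k, π k ∈ T) → ∀ j ≤ sInf {k | π k ∈ T},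
      spCost w T (fun m => π (j + m)) ≤ coalVal A i (spCost w T) (π j))
    {q : ℕ} (hq : ∀ t < q, π t ∉ T) :
    ∃ S, GuaranteesAtLeast (coalition A i) S (spCost w T) (π q)
      (spCost w T (fun m => π (q + m))) := by
  by_cases hhit : ∃ k, π k ∈ T
  · obtain ⟨k, hk⟩ := hhit
    have hqk : q ≤ k := not_lt.1 fun h => hq k h hk
    obtain ⟨_, -, hC⟩ := exists_spCost_eq_prefixWeight (w := w) (ρ := fun m => π (q + m))
      ⟨k - q, by rwa [Nat.add_sub_cancel' hqk]⟩
    have hle := hval ⟨k, hk⟩ q (le_csInf ⟨k, hk⟩ fun t ht => not_lt.1 fun h => hq t h ht)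
    rw [hC] at hle ⊢
    exact exists_guaranteesAtLeast_of_le_valIS w T hle
  · push Not at hhit
    obtain ⟨S, hS⟩ :=
      exists_spoiler_of_not_mem_winRegion (isOpenObj_reachObj T) (hmiss hhit q)
    refine ⟨S, fun ρ hρ h0 hc => ?_⟩
    rw [spCost_eq_top fun k hk => hS ρ hρ h0 hc ⟨k, hk⟩]
    exact le_top

section GrimTrigger

variable {A : Arena V n} {π : ℕ → V}

/-- Indices past the end of `h` count as disagreements with `π`, so this is `h.length`
when `h` follows `π`. -/
noncomputable def firstDev (π : ℕ → V) (h : List V) : ℕ :=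
  Nat.find (⟨h.length, by simp⟩ : ∃ t, h[t]? ≠ some (π t))

lemma getElem?_eq_of_lt_firstDev {h : List V} {t : ℕ} (ht : t < firstDev π h) :
    h[t]? = some (π t) :=
  not_not.1 (Nat.find_min _ ht)

lemma firstDev_pref_of_eqOn {ρ : ℕ → V} {k : ℕ} (h : ∀ t < k, ρ t = π t) :
    firstDev π (pref ρ k) = k := by
  rw [firstDev, Nat.find_eq_iff]
  refine ⟨by simp [getElem?_pref], fun t ht => ?_⟩
  simp [getElem?_pref, ht, h t ht]

lemma firstDev_pref_of_ne {ρ : ℕ → V} {m k : ℕ} (hm : ρ m ≠ π m) (hmk : m < k)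
    (h : ∀ t < m, ρ t = π t) : firstDev π (pref ρ k) = m := by
  rw [firstDev, Nat.find_eq_iff]
  refine ⟨by simp [getElem?_pref, hmk, hm], fun t ht => ?_⟩
  simp [getElem?_pref, show t < k by omega, h t ht]

/-- Follow `π`; as soon as the play leaves `π` right after position `q`, switch to the
punishing strategy `P i q` against the owner `i` of `π q`. -/
noncomputable def grimTrigger (hπ : A.IsPlay π)
    (P : (i : Fin n) → ℕ → (coalition A i).Strategy) : A.Strategy where
  next g u :=
    if firstDev π (g ++ [u]) = g.length + 1 then π (g.length + 1)
    else (P (A.owner (π (firstDev π (g ++ [u]) - 1))) (firstDev π (g ++ [u]) - 1)).next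
      (g.drop (firstDev π (g ++ [u]) - 1)) u
  valid g u := by
    split_ifs with hd
    · have hu := getElem?_eq_of_lt_firstDev (π := π) (h := g ++ [u]) (t := g.length) (by omega)
      simp only [List.getElem?_append_right le_rfl, Nat.sub_self, List.getElem?_singleton,
        if_pos, Option.some.injEq] at hu
      exact hu ▸ hπ _
    · exact (P _ _).valid _ _

variable (hπ : A.IsPlay π) (P : (i : Fin n) → ℕ → (coalition A i).Strategy)

lemma grimTrigger_next_of_eqOn {ρ : ℕ → V} {k : ℕ} (h : ∀ t ≤ k, ρ t = π t) :
    (grimTrigger hπ P).next (pref ρ k) (ρ k) = π (k + 1) := by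
  have hd : firstDev π (pref ρ k ++ [ρ k]) = k + 1 := by
    rw [← pref_succ]
    exact firstDev_pref_of_eqOn fun t ht => h t (by omega)
  simp [grimTrigger, hd, pref_length]

lemma grimTrigger_next_of_ne {ρ : ℕ → V} {q k : ℕ} (hne : ρ (q + 1) ≠ π (q + 1))
    (h : ∀ t ≤ q, ρ t = π t) (hqk : q < k) :
    (grimTrigger hπ P).next (pref ρ k) (ρ k) =
      (P (A.owner (π q)) q).next ((pref ρ k).drop q) (ρ k) := by
  have hd : firstDev π (pref ρ k ++ [ρ k]) = q + 1 := by
    rw [← pref_succ]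
    exact firstDev_pref_of_ne hne (by omega) fun t ht => h t (by omega)
  unfold grimTrigger
  dsimp only
  rw [hd, if_neg (by rw [pref_length]; omega), Nat.add_sub_cancel]

lemma outcome_grimTrigger : outcome A (fun _ => grimTrigger hπ P) (π 0) = π :=
  outcome_eq_of_consistent rfl fun _ _ _ => (grimTrigger_next_of_eqOn hπ P fun _ _ => rfl).symm

lemma grimTrigger_deviation (i : Fin n) (τ : A.Strategy) {ρ : ℕ → V}
    (hρ : outcome A (Function.update (fun _ => grimTrigger hπ P) i τ) (π 0) = ρ) {q : ℕ}
    (hne : ρ (q + 1) ≠ π (q + 1)) (h : ∀ t ≤ q, ρ t = π t) :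
    A.owner (π q) = i ∧ Consistent (coalition A i) 1 (P i q) (fun t => ρ (q + t)) := by
  have hstep (k : ℕ) (hk : A.owner (ρ k) ≠ i) :
      ρ (k + 1) = (grimTrigger hπ P).next (pref ρ k) (ρ k) := by
    subst hρ
    rw [consistent_outcome _ (π 0) _ k rfl, Function.update_of_ne hk]
  have hown : A.owner (π q) = i := by
    by_contra hown
    exact hne ((hstep q (h q le_rfl ▸ hown)).trans (grimTrigger_next_of_eqOn hπ P h))
  refine ⟨hown, fun t ht => ?_⟩
  have ht' : A.owner (ρ (q + t)) ≠ i := coalition_owner_eq_one.1 ht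
  have htpos : 0 < t :=
    Nat.pos_of_ne_zero fun h0 => ht' (by rw [h0, Nat.add_zero, h q le_rfl, hown])
  show ρ (q + t + 1) = (P i q).next (pref (fun m => ρ (q + m)) t) (ρ (q + t))
  subst hown
  rw [hstep _ ht', grimTrigger_next_of_ne hπ P hne h (by omega), pref_drop]

theorem isNECost_grimTrigger (w : Fin n → V → V → ℕ) (T : Fin n → Set V)
    (hP : ∀ i q, (∀ t < q, π t ∉ T i) → GuaranteesAtLeast (coalition A i) (P i q)
      (spCost (w i) (T i)) (π q) (spCost (w i) (T i) (fun m => π (q + m)))) :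
    A.IsNECost (fun i => spCost (w i) (T i)) (fun _ => grimTrigger hπ P) (π 0) := by
  intro i τ
  rw [outcome_grimTrigger]
  set ρ := outcome A (Function.update (fun _ => grimTrigger hπ P) i τ) (π 0)
  by_cases hdev : ∀ t, ρ t = π t
  · rw [funext hdev]
  push Not at hdev
  have h0 : Nat.find hdev ≠ 0 := fun h0 => Nat.find_spec hdev (by rw [h0]; rfl)
  obtain ⟨q, hq⟩ := Nat.exists_eq_succ_of_ne_zero h0
  have hne : ρ (q + 1) ≠ π (q + 1) := by
    have := Nat.find_spec hdev
    rwa [hq] at this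
  have hagree : ∀ t ≤ q, ρ t = π t := fun t ht => not_not.1 (Nat.find_min hdev (by omega))
  obtain ⟨rfl, hcons⟩ := grimTrigger_deviation hπ P i τ rfl hne hagree
  exact spCost_le_of_eqOn hagree fun hq' =>
    hP _ q hq' _ (fun t => isPlay_outcome _ _ (q + t)) (hagree q le_rfl) hcons

end GrimTrigger

theorem exists_isNECost_of_punishers {A : Arena V n} {π : ℕ → V} (hπ : A.IsPlay π)
    (w : Fin n → V → V → ℕ) (T : Fin n → Set V)
    (hP : ∀ i q, (∀ t < q, π t ∉ T i) → ∃ S, GuaranteesAtLeast (coalition A i) S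
      (spCost (w i) (T i)) (π q) (spCost (w i) (T i) (fun m => π (q + m)))) :
    ∃ σ : Fin n → A.Strategy,
      A.IsNECost (fun i => spCost (w i) (T i)) σ (π 0) ∧ outcome A σ (π 0) = π := by
  have hP' : ∀ i q, ∃ S, (∀ t < q, π t ∉ T i) → GuaranteesAtLeast (coalition A i) S
      (spCost (w i) (T i)) (π q) (spCost (w i) (T i) (fun m => π (q + m))) := fun i q => by
    by_cases hq : ∀ t < q, π t ∉ T i
    · exact (hP i q hq).imp fun _ hS _ => hS
    · exact ⟨Classical.arbitrary _, fun h => absurd h hq⟩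
  choose P hP' using hP'
  exact ⟨_, isNECost_grimTrigger hπ P w T hP', outcome_grimTrigger hπ P⟩

end Arena

/-- Characterisation of Nash-equilibrium outcomes in shortest-path
games (with one target and weight function per player). -/
theorem ne_outcome_characterisation_spath
    (V : Type) (n : ℕ) (A : Arena V n) (T : Fin n → Set V) (w : Fin n → V → V → ℕ)
    (π : ℕ → V) (hπ : A.IsPlay π) :
    (∃ σ : Fin n → A.Strategy,
        A.IsNECost (fun i => spCost (w i) (T i)) σ (π 0) ∧ outcome A σ (π 0) = π) ↔
      ((∀ i, (∀ k, π k ∉ T i) → ∀ j, π j ∉ coalWin A i (ReachObj (T i))) ∧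
        (∀ i, (∃ k, π k ∈ T i) → ∀ j ≤ sInf {k | π k ∈ T i},
          spCost (w i) (T i) (fun m => π (j + m)) ≤
            coalVal A i (spCost (w i) (T i)) (π j))) := by
  constructor
  · rintro ⟨σ, hNE, hout⟩
    refine ⟨fun i hmiss j hwin => ?_, fun i _ j hj => ?_⟩
    · obtain ⟨S, hS⟩ := hwin
      have hlt := spCost_shift_lt_of_forall_deviation hπ hout (hNE i) (fun t _ => hmiss t) S
        fun ρ hρ h0 hc => spCost_lt_top_iff.2 (hS ρ hρ h0 hc)
      exact hlt.ne (spCost_eq_top fun m => hmiss (j + m))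
    · by_contra hlt
      obtain ⟨S, hS⟩ := exists_forall_lt_of_valIS_lt (not_le.1 hlt)
      exact lt_irrefl _ (spCost_shift_lt_of_forall_deviation hπ hout (hNE i)
        (fun t ht => Nat.notMem_of_lt_sInf (ht.trans_le hj)) S hS)
  · rintro ⟨hmiss, hval⟩
    exact exists_isNECost_of_punishers hπ w T fun i q hq =>
      exists_punisher i (w i) (T i) (hmiss i) (hval i) hq
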